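/- Let A be a two-block SBM adjacency matrix with parameters (N, p). Then for all indices i and j lying in different communities, E[(A²)_{ij}] = 2(N−1)p(1−p) and E[((A²)_{ij})²] = 2(N−1)p(1−p) + 2(N−1)(2N−3)p²(1−p)². -/

import Mathlib

/-!
Since `A` has zero diagonal, `(A²)ᵢⱼ = ∑ₖ Aᵢₖ Aₖⱼ` over the `2N - 2` vertices `k ∉ {i, j}`.
Each summand is the indicator that the path `i - k - j` is present; as `i` and `j` lie in
different communities, exactly one of its two edges is within a community, so the summand has
mean `p (1 - p)`. Paths through distinct middle vertices use four distinct edges, hence are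
independent, and the second moment of a sum of such indicators is `n q + n (n - 1) q²`.
-/

open MeasureTheory ProbabilityTheory Matrix

/-- `i` and `j` lie in the same community, where the communities of `Fin (2*N)` are
`{0, …, N-1}` and `{N, …, 2N-1}`. -/
def sameCom (N : ℕ) (i j : Fin (2 * N)) : Prop := ((i : ℕ) < N ↔ (j : ℕ) < N)

instance (N : ℕ) (i j : Fin (2 * N)) : Decidable (sameCom N i j) := by
  unfold sameCom; infer_instance

/-- The Bernoulli distribution on `ℝ` with success probability `q`:
mass `q` at `1` and mass `1 - q` at `0`. -/
noncomputable def bernoulliReal (q : ℝ) : Measure ℝ :=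
  ENNReal.ofReal q • Measure.dirac (1 : ℝ) + ENNReal.ofReal (1 - q) • Measure.dirac (0 : ℝ)

/-- `A` is a two-block SBM adjacency matrix with parameters `(N, p)` under the measure `μ`. -/
structure IsSBM {Ω : Type*} [MeasurableSpace Ω] (μ : Measure Ω) (N : ℕ) (p : ℝ)
    (A : Ω → Matrix (Fin (2 * N)) (Fin (2 * N)) ℝ) : Prop where
  isProb : IsProbabilityMeasure μ
  symm : ∀ ω, (A ω)ᵀ = A ω
  diag : ∀ ω i, A ω i i = 0
  vals : ∀ ω i j, A ω i j = 0 ∨ A ω i j = 1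
  meas : ∀ i j, Measurable fun ω => A ω i j
  indep : iIndepFun
    (fun (e : {e : Fin (2 * N) × Fin (2 * N) // e.1 < e.2}) ω => A ω e.1.1 e.1.2) μ
  bern : ∀ i j, i < j →
    μ.map (fun ω => A ω i j) = bernoulliReal (if sameCom N i j then p else 1 - p)

open Finset

lemma integral_id_bernoulliReal {q : ℝ} (hq : 0 ≤ q) : ∫ x, x ∂bernoulliReal q = q := by
  rw [bernoulliReal, integral_add_measure, integral_smul_measure, integral_smul_measure]
  · simp [hq]
  all_goals exact (integrable_dirac (by simp)).smul_measure ENNReal.ofReal_ne_top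

lemma ProbabilityTheory.iIndepFun.integral_finset_prod {Ω ι : Type*} [MeasurableSpace Ω]
    {μ : Measure Ω} {X : ι → Ω → ℝ} (hX : iIndepFun X μ)
    (mX : ∀ i, AEStronglyMeasurable (X i) μ) (s : Finset ι) :
    ∫ ω, ∏ i ∈ s, X i ω ∂μ = ∏ i ∈ s, ∫ ω, X i ω ∂μ := by
  have hs := hX.precomp (g := (Subtype.val : {x // x ∈ s} → ι)) Subtype.val_injective
  convert hs.integral_fun_prod_eq_prod_integral (fun i => mX i) using 1
  · exact integral_congr_ae (.of_forall fun ω => (prod_coe_sort s (X · ω)).symm)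
  · exact (prod_coe_sort s _).symm

lemma Matrix.sq_apply_eq_sum_sdiff {n R : Type*} [Fintype n] [DecidableEq n] [Semiring R]
    {M : Matrix n n R} (hM : ∀ k, M k k = 0) (i j : n) :
    (M ^ 2) i j = ∑ k ∈ univ \ {i, j}, M i k * M k j := by
  rw [sq, mul_apply]
  refine (sum_subset (subset_univ _) fun k _ hk => ?_).symm
  simp only [mem_sdiff, mem_univ, true_and, not_not, mem_insert, mem_singleton] at hk
  rcases hk with rfl | rfl <;> simp [hM]

lemma integral_sq_sum_of_mul_self_eq {Ω ι : Type*} [MeasurableSpace Ω] [DecidableEq ι]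
    {μ : Measure Ω} {Y : ι → Ω → ℝ} {q : ℝ} (s : Finset ι)
    (hint : ∀ k ∈ s, ∀ l ∈ s, Integrable (fun ω => Y k ω * Y l ω) μ)
    (hidem : ∀ k ∈ s, ∀ ω, Y k ω * Y k ω = Y k ω)
    (hmean : ∀ k ∈ s, ∫ ω, Y k ω ∂μ = q)
    (hcorr : ∀ k ∈ s, ∀ l ∈ s, k ≠ l → ∫ ω, Y k ω * Y l ω ∂μ = q ^ 2) :
    ∫ ω, (∑ k ∈ s, Y k ω) ^ 2 ∂μ = #s * q + #s * (#s - 1) * q ^ 2 := by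
  have hrow : ∀ k ∈ s, ∑ l ∈ s, ∫ ω, Y k ω * Y l ω ∂μ = q + (#s - 1) * q ^ 2 := by
    intro k hk
    rw [← add_sum_erase s _ hk, sum_congr rfl fun l hl => hcorr k hk l (mem_of_mem_erase hl)
      (ne_of_mem_erase hl).symm, sum_const, card_erase_of_mem hk, nsmul_eq_mul,
      Nat.cast_pred (card_pos.mpr ⟨k, hk⟩)]
    simp_rw [hidem k hk, hmean k hk]
  simp_rw [sq, sum_mul_sum]
  rw [integral_finsetSum _ fun k hk => integrable_finsetSum _ fun l hl => hint k hk l hl,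
    sum_congr rfl fun k hk => (integral_finsetSum _ fun l hl => hint k hk l hl).trans
      (hrow k hk), sum_const, nsmul_eq_mul]
  ring

section Edges

variable {N : ℕ}

lemma sameCom_comm {a b : Fin (2 * N)} : sameCom N a b ↔ sameCom N b a := Iff.comm

lemma ne_of_not_sameCom {a b : Fin (2 * N)} (h : ¬ sameCom N a b) : a ≠ b := by
  rintro rfl
  exact h Iff.rfl

def edgeProb (N : ℕ) (p : ℝ) (a b : Fin (2 * N)) : ℝ := if sameCom N a b then p else 1 - p

lemma edgeProb_comm (p : ℝ) (a b : Fin (2 * N)) : edgeProb N p a b = edgeProb N p b a := by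
  simp only [edgeProb, sameCom_comm]

lemma edgeProb_mul_edgeProb {p : ℝ} {i j : Fin (2 * N)} (hij : ¬ sameCom N i j)
    (k : Fin (2 * N)) : edgeProb N p i k * edgeProb N p k j = p * (1 - p) := by
  unfold edgeProb
  by_cases hik : sameCom N i k <;> by_cases hkj : sameCom N k j <;>
    simp only [hik, hkj, if_true, if_false] <;> first | (unfold sameCom at *; tauto) | ring

/-- The index of the entry `(a, b)` in the independent family `IsSBM.indep`. -/
def edge (a b : Fin (2 * N)) (h : a ≠ b) : {e : Fin (2 * N) × Fin (2 * N) // e.1 < e.2} :=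
  if hab : a < b then ⟨(a, b), hab⟩ else ⟨(b, a), h.lt_or_gt.resolve_left hab⟩

lemma edge_eq_edge_iff {a b c d : Fin (2 * N)} (hab : a ≠ b) (hcd : c ≠ d) :
    edge a b hab = edge c d hcd ↔ a = c ∧ b = d ∨ a = d ∧ b = c := by
  unfold edge
  split_ifs <;> simp only [Subtype.mk.injEq, Prod.mk.injEq] <;> grind

lemma edgeProb_edge (p : ℝ) {a b : Fin (2 * N)} (h : a ≠ b) :
    edgeProb N p (edge a b h).1.1 (edge a b h).1.2 = edgeProb N p a b := by
  unfold edge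
  split_ifs
  exacts [rfl, edgeProb_comm p b a]

end Edges

namespace IsSBM

variable {Ω : Type*} [MeasurableSpace Ω] {μ : Measure Ω} {N : ℕ} {p : ℝ}
  {A : Ω → Matrix (Fin (2 * N)) (Fin (2 * N)) ℝ}

lemma entry_comm (hA : IsSBM μ N p A) (ω : Ω) (a b : Fin (2 * N)) : A ω a b = A ω b a :=
  congrFun₂ (hA.symm ω) b a

lemma entry_edge (hA : IsSBM μ N p A) (ω : Ω) {a b : Fin (2 * N)} (h : a ≠ b) :
    A ω (edge a b h).1.1 (edge a b h).1.2 = A ω a b := by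
  unfold edge
  split_ifs
  exacts [rfl, hA.entry_comm ω b a]

lemma entry_mem_unitInterval (hA : IsSBM μ N p A) (ω : Ω) (a b : Fin (2 * N)) :
    A ω a b ∈ unitInterval := by
  rcases hA.vals ω a b with h | h <;> simp [h]

lemma entry_mul_self (hA : IsSBM μ N p A) (ω : Ω) (a b : Fin (2 * N)) :
    A ω a b * A ω a b = A ω a b := by
  rcases hA.vals ω a b with h | h <;> simp [h]

lemma path_mul_self (hA : IsSBM μ N p A) (ω : Ω) (i j k : Fin (2 * N)) :
    A ω i k * A ω k j * (A ω i k * A ω k j) = A ω i k * A ω k j := by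
  rw [mul_mul_mul_comm, hA.entry_mul_self, hA.entry_mul_self]

lemma path_mem_unitInterval (hA : IsSBM μ N p A) (ω : Ω) (i j k : Fin (2 * N)) :
    A ω i k * A ω k j ∈ unitInterval :=
  unitInterval.mul_mem (hA.entry_mem_unitInterval ω i k) (hA.entry_mem_unitInterval ω k j)

lemma integrable_path (hA : IsSBM μ N p A) (i j k : Fin (2 * N)) :
    Integrable (fun ω => A ω i k * A ω k j) μ :=
  have := hA.isProb
  .of_mem_Icc 0 1 ((hA.meas i k).mul (hA.meas k j)).aemeasurable
    (ae_of_all _ (hA.path_mem_unitInterval · i j k))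

lemma integrable_path_mul_path (hA : IsSBM μ N p A) (i j k l : Fin (2 * N)) :
    Integrable (fun ω => A ω i k * A ω k j * (A ω i l * A ω l j)) μ :=
  have := hA.isProb
  .of_mem_Icc 0 1 ((hA.integrable_path i j k).aemeasurable.mul
      (hA.integrable_path i j l).aemeasurable)
    (ae_of_all _ fun ω => unitInterval.mul_mem (hA.path_mem_unitInterval ω i j k)
      (hA.path_mem_unitInterval ω i j l))

lemma integral_entry_of_lt (hA : IsSBM μ N p A) (hp : 0 ≤ p) (hp1 : p ≤ 1)
    {a b : Fin (2 * N)} (hab : a < b) : ∫ ω, A ω a b ∂μ = edgeProb N p a b := by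
  calc ∫ ω, A ω a b ∂μ = ∫ x, x ∂μ.map (fun ω => A ω a b) :=
        (integral_map (hA.meas a b).aemeasurable aestronglyMeasurable_id).symm
    _ = edgeProb N p a b := by
        rw [hA.bern a b hab]
        exact integral_id_bernoulliReal (by split_ifs <;> linarith)

lemma integral_prod_edges (hA : IsSBM μ N p A) (hp : 0 ≤ p) (hp1 : p ≤ 1)
    (s : Finset {e : Fin (2 * N) × Fin (2 * N) // e.1 < e.2}) :
    ∫ ω, ∏ e ∈ s, A ω e.1.1 e.1.2 ∂μ = ∏ e ∈ s, edgeProb N p e.1.1 e.1.2 := by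
  rw [hA.indep.integral_finset_prod (fun e => (hA.meas _ _).aestronglyMeasurable)]
  exact prod_congr rfl fun e _ => hA.integral_entry_of_lt hp hp1 e.2

lemma integral_path (hA : IsSBM μ N p A) (hp : 0 ≤ p) (hp1 : p ≤ 1) {i j k : Fin (2 * N)}
    (hij : ¬ sameCom N i j) (hki : k ≠ i) (hkj : k ≠ j) :
    ∫ ω, A ω i k * A ω k j ∂μ = p * (1 - p) := by
  have hne : edge i k hki.symm ≠ edge k j hkj := by
    simp [edge_eq_edge_iff, hkj, ne_of_not_sameCom hij]
  calc ∫ ω, A ω i k * A ω k j ∂μ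
        = ∫ ω, ∏ e ∈ {edge i k hki.symm, edge k j hkj}, A ω e.1.1 e.1.2 ∂μ := by
          simp_rw [prod_pair hne, hA.entry_edge]
    _ = p * (1 - p) := by
          rw [hA.integral_prod_edges hp hp1, prod_pair hne, edgeProb_edge, edgeProb_edge,
            edgeProb_mul_edgeProb hij]

lemma integral_path_mul_path (hA : IsSBM μ N p A) (hp : 0 ≤ p) (hp1 : p ≤ 1)
    {i j k l : Fin (2 * N)} (hij : ¬ sameCom N i j) (hki : k ≠ i) (hkj : k ≠ j) (hli : l ≠ i)
    (hlj : l ≠ j) (hkl : k ≠ l) :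
    ∫ ω, A ω i k * A ω k j * (A ω i l * A ω l j) ∂μ = (p * (1 - p)) ^ 2 := by
  have hprod : ∀ f : {e : Fin (2 * N) × Fin (2 * N) // e.1 < e.2} → ℝ,
      ∏ e ∈ {edge i k hki.symm, edge k j hkj, edge i l hli.symm, edge l j hlj}, f e
        = f (edge i k hki.symm) * f (edge k j hkj)
          * (f (edge i l hli.symm) * f (edge l j hlj)) := by
    intro f
    have hij' := ne_of_not_sameCom hij
    rw [prod_insert, prod_insert, prod_pair, mul_assoc]
    all_goals simp [edge_eq_edge_iff, hki, hkj, hlj, hkl, hki.symm, hli.symm, hlj.symm, hij',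
      hij'.symm]
  calc ∫ ω, A ω i k * A ω k j * (A ω i l * A ω l j) ∂μ
        = ∫ ω, ∏ e ∈ {edge i k hki.symm, edge k j hkj, edge i l hli.symm, edge l j hlj},
            A ω e.1.1 e.1.2 ∂μ := by
          simp_rw [hprod, hA.entry_edge]
    _ = (p * (1 - p)) ^ 2 := by
          rw [hA.integral_prod_edges hp hp1, hprod]
          simp only [edgeProb_edge, edgeProb_mul_edgeProb hij, sq]

end IsSBM

theorem stmt11_general {Ω : Type*} [MeasurableSpace Ω] (μ : Measure Ω) (N : ℕ)
    (p : ℝ) (hp : 1 / 2 < p) (hp1 : p ≤ 1)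
    (A : Ω → Matrix (Fin (2 * N)) (Fin (2 * N)) ℝ) (hA : IsSBM μ N p A)
    (i j : Fin (2 * N)) (hcom : ¬ sameCom N i j) :
    (∫ ω, ((A ω) ^ 2) i j ∂μ) = 2 * ((N : ℝ) - 1) * p * (1 - p) ∧
    (∫ ω, (((A ω) ^ 2) i j) ^ 2 ∂μ) =
      2 * ((N : ℝ) - 1) * p * (1 - p)
        + 2 * ((N : ℝ) - 1) * (2 * N - 3) * p ^ 2 * (1 - p) ^ 2 := by
  have hp0 : 0 ≤ p := by linarith
  set S := univ \ {i, j}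
  have hS : ∀ k ∈ S, k ≠ i ∧ k ≠ j := by simp [S]
  have hcard : (#S : ℝ) = 2 * N - 2 := by
    have := card_sdiff_add_card_eq_card (subset_univ {i, j})
    rw [card_pair (ne_of_not_sameCom hcom), card_univ, Fintype.card_fin] at this
    rw [eq_sub_iff_add_eq]
    exact_mod_cast this
  have hpaths : ∀ ω, (A ω ^ 2) i j = ∑ k ∈ S, A ω i k * A ω k j :=
    fun ω => sq_apply_eq_sum_sdiff (hA.diag ω) i j
  have hmean : ∀ k ∈ S, ∫ ω, A ω i k * A ω k j ∂μ = p * (1 - p) :=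
    fun k hk => hA.integral_path hp0 hp1 hcom (hS k hk).1 (hS k hk).2
  simp_rw [hpaths]
  constructor
  · rw [integral_finsetSum _ fun k _ => hA.integrable_path i j k, sum_congr rfl hmean, sum_const,
      nsmul_eq_mul, hcard]
    ring
  · rw [integral_sq_sum_of_mul_self_eq S (fun k _ l _ => hA.integrable_path_mul_path i j k l)
      (fun k _ ω => hA.path_mul_self ω i j k) hmean
      (fun k hk l hl hkl => hA.integral_path_mul_path hp0 hp1 hcom (hS k hk).1 (hS k hk).2
        (hS l hl).1 (hS l hl).2 hkl), hcard]
    ring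

theorem stmt11 {Ω : Type*} [MeasurableSpace Ω] (μ : Measure Ω) (N : ℕ) (hN : 1 ≤ N)
    (p : ℝ) (hp : 1 / 2 < p) (hp1 : p ≤ 1)
    (A : Ω → Matrix (Fin (2 * N)) (Fin (2 * N)) ℝ) (hA : IsSBM μ N p A)
    (i j : Fin (2 * N)) (hcom : ¬ sameCom N i j) :
    (∫ ω, ((A ω) ^ 2) i j ∂μ) = 2 * ((N : ℝ) - 1) * p * (1 - p) ∧
    (∫ ω, (((A ω) ^ 2) i j) ^ 2 ∂μ) =
      2 * ((N : ℝ) - 1) * p * (1 - p)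
        + 2 * ((N : ℝ) - 1) * (2 * N - 3) * p ^ 2 * (1 - p) ^ 2 :=
  stmt11_general μ N p hp hp1 A hA i j hcom
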